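/- arXiv:1707.03542 — 2 statements merged into one kernel-verified Lean document; each statement's English description precedes it below -/
import Mathlib

section
/- Let μ ∈ ℝ and σ > 0, r ≥ 0, and define h(x) = μx - (σ²/2)x² - r·max(x-1, 0). If μ - σ² ≥ r, then h attains its global maximum over ℝ at x* = (μ - r)/σ², with maximum value h(x*) = r + (μ - r)²/(2σ²). -/
/-!
On the branch `x ≥ 1` the function is the concave quadratic
`r + (μ - r) x - (σ²/2) x²`, whose vertex `x* = (μ - r)/σ²` lies in that branch exactly when
`μ - σ² ≥ r`. Since `r ≥ 0` and `max (x - 1) 0 ≥ x - 1`, this quadratic dominates `h` everywhere,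
so its maximum `r + (μ - r)²/(2σ²)` bounds `h` and is attained at `x*`.
-/

theorem half_mul_sq_vertex_form {a : ℝ} (ha : a ≠ 0) (b c x : ℝ) :
    b * x - a / 2 * x ^ 2 + c = c + b ^ 2 / (2 * a) - a / 2 * (x - b / a) ^ 2 := by
  field_simp
  ring

theorem stmt_0 (μ σ r : ℝ) (hσ : 0 < σ) (hr : 0 ≤ r) (hcase : μ - σ^2 ≥ r)
    (h : ℝ → ℝ) (hdef : ∀ x, h x = μ * x - σ^2 / 2 * x^2 - r * max (x - 1) 0) :
    (∀ x : ℝ, h x ≤ h ((μ - r) / σ^2)) ∧ h ((μ - r) / σ^2) = r + (μ - r)^2 / (2 * σ^2) := by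
  have hσ2 : 0 < σ ^ 2 := by positivity
  have hvertex (x : ℝ) : μ * x - σ ^ 2 / 2 * x ^ 2 - r * (x - 1) =
      r + (μ - r) ^ 2 / (2 * σ ^ 2) - σ ^ 2 / 2 * (x - (μ - r) / σ ^ 2) ^ 2 := by
    rw [← half_mul_sq_vertex_form hσ2.ne']
    ring
  have hkink : 1 ≤ (μ - r) / σ ^ 2 := (one_le_div hσ2).2 (by linarith)
  have hmax : h ((μ - r) / σ ^ 2) = r + (μ - r) ^ 2 / (2 * σ ^ 2) := by
    rw [hdef, max_eq_left (sub_nonneg.2 hkink), hvertex]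
    simp
  refine ⟨fun x => ?_, hmax⟩
  have hhinge : r * (x - 1) ≤ r * max (x - 1) 0 :=
    mul_le_mul_of_nonneg_left (le_max_left _ _) hr
  have hsq : 0 ≤ σ ^ 2 / 2 * (x - (μ - r) / σ ^ 2) ^ 2 := by positivity
  rw [hmax, hdef]
  linarith [hvertex x]
end

section
/- Let μ ≥ σ² > 0, λ ≥ 0, and define f : [0,∞) → ℝ by f(r) = (1-λ)(μ-r)²/(2σ²) for 0 ≤ r ≤ μ - σ², and f(r) = μ - (σ²/2)(1+λ) for r ≥ μ - σ². Set λ* = 1 - 2σ²/(μ + σ²). Then f(0) > f(μ - σ²) if and only if λ < λ*. -/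
/-!
For `μ > σ²` the difference of the two branch values factors as
`f 0 - f (μ - σ²) = (μ - σ²) ((μ - σ²) - λ (μ + σ²)) / (2σ²)`, whose sign is that of
`(μ - σ²)/(μ + σ²) - λ`, and `λ* = (μ - σ²)/(μ + σ²)`. When `μ = σ²` both points fall in the flat
branch, so `f 0 = f (μ - σ²)`, while `λ* = 0 ≤ λ`.
-/

lemma one_sub_two_mul_div_add {a b : ℝ} (h : a + b ≠ 0) :
    1 - 2 * b / (a + b) = (a - b) / (a + b) := by
  field_simp
  ring

lemma quadratic_sub_flat_eq (μ s lam : ℝ) (hs : s ≠ 0) :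
    (1 - lam) * μ ^ 2 / (2 * s) - (μ - s / 2 * (1 + lam)) =
      (μ - s) * (μ - s - lam * (μ + s)) / (2 * s) := by
  field_simp
  ring

lemma flat_lt_quadratic_iff {μ s lam : ℝ} (hs : 0 < s) (hμ : s < μ) :
    μ - s / 2 * (1 + lam) < (1 - lam) * μ ^ 2 / (2 * s) ↔ lam < (μ - s) / (μ + s) := by
  rw [← sub_pos, quadratic_sub_flat_eq μ s lam hs.ne', div_pos_iff_of_pos_right (by positivity),
    mul_pos_iff_of_pos_left (sub_pos.mpr hμ), sub_pos, lt_div_iff₀ (by linarith)]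

theorem stmt_12 (μ σ lam : ℝ) (hσ : 0 < σ) (hμ : σ^2 ≤ μ) (hlam : 0 ≤ lam)
    (f : ℝ → ℝ)
    (hdef : ∀ r, f r =
      if r < μ - σ^2 then (1 - lam) * (μ - r)^2 / (2 * σ^2)
      else μ - σ^2 / 2 * (1 + lam)) :
    f 0 > f (μ - σ^2) ↔ lam < 1 - 2 * σ^2 / (μ + σ^2) := by
  have hs : 0 < σ ^ 2 := by positivity
  rw [one_sub_two_mul_div_add (by linarith), hdef 0, hdef (μ - σ ^ 2), if_neg (lt_irrefl _),
    sub_zero, gt_iff_lt]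
  rcases hμ.lt_or_eq with hlt | heq
  · rw [if_pos (by linarith)]
    exact flat_lt_quadratic_iff hs hlt
  · rw [if_neg (by linarith)]
    exact iff_of_false (lt_irrefl _) (by rw [heq, sub_self, zero_div]; exact hlam.not_gt)
end
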